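/- arXiv:1605.02826 — 3 statements merged into one kernel-verified Lean document; each statement's English description precedes it below -/
import Mathlib

section
/- Let f_n : ℝ → ℝ be a sequence of continuous functions, each of which is monotone, converging pointwise to a continuous function f : ℝ → ℝ. Then f_n converges to f uniformly on every compact subset of ℝ. -/
open Filter Topology Set

/-- A sequence of continuous monotone functions `ℝ → ℝ` converging pointwise to a
continuous function converges uniformly on every compact subset of `ℝ`. -/
theorem dini_polya_monotone_uniform_convergence
    (f : ℕ → ℝ → ℝ) (g : ℝ → ℝ)
    (hfc : ∀ n, Continuous (f n))
    (hmono : ∀ n, Monotone (f n) ∨ Antitone (f n))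
    (hgc : Continuous g)
    (hpt : ∀ x : ℝ, Tendsto (fun n => f n x) atTop (𝓝 (g x))) :
    ∀ K : Set ℝ, IsCompact K → TendstoUniformlyOn f g atTop K := by
  intro K hK
  rw [Metric.tendstoUniformlyOn_iff]
  intro ε hε
  -- bound K in an interval
  obtain ⟨r, hr0, hKr⟩ : ∃ r : ℝ, 0 ≤ r ∧ K ⊆ Icc (-r) r := by
    obtain ⟨r, hr⟩ := hK.isBounded.subset_closedBall 0
    refine ⟨max r 0, le_max_right _ _, fun x hx => ?_⟩
    have hx' := hr hx
    rw [Real.closedBall_eq_Icc] at hx'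
    exact ⟨by simp only [zero_sub] at hx'; linarith [hx'.1, le_max_left r 0],
      by simp only [zero_add] at hx'; linarith [hx'.2, le_max_left r 0]⟩
  -- uniform continuity of g on a slightly larger compact interval
  have hgucJ : UniformContinuousOn g (Icc (-r - 1) (r + 1)) :=
    isCompact_Icc.uniformContinuousOn_of_continuous hgc.continuousOn
  rw [Metric.uniformContinuousOn_iff] at hgucJ
  obtain ⟨δ, hδ0, hδ⟩ := hgucJ (ε / 3) (by linarith)
  set δ' : ℝ := min (δ / 2) 1 with hδ'def
  have hδ'0 : (0 : ℝ) < δ' := lt_min (by linarith) one_pos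
  have hδ'δ : δ' < δ := lt_of_le_of_lt (min_le_left _ _) (by linarith)
  have hδ'1 : δ' ≤ 1 := min_le_right _ _
  set N : ℕ := ⌈2 * r / δ'⌉₊ with hNdef
  set t : ℕ → ℝ := fun i => -r + i * δ' with htdef
  -- eventually all the grid values are close
  have hev : ∀ᶠ n in atTop, ∀ i ∈ Finset.range (N + 2),
      dist (f n (t i)) (g (t i)) < ε / 3 := by
    rw [Filter.eventually_all_finset]
    intro i _
    have := Metric.tendsto_nhds.mp (hpt (t i)) (ε / 3) (by linarith)
    exact this
  filter_upwards [hev] with n hn x hxK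
  obtain ⟨hx1, hx2⟩ := hKr hxK
  set i : ℕ := ⌊(x + r) / δ'⌋₊ with hidef
  have hxr0 : 0 ≤ (x + r) / δ' := div_nonneg (by linarith) hδ'0.le
  have hfl : (i : ℝ) * δ' ≤ x + r := by
    have h1 : (i : ℝ) ≤ (x + r) / δ' := Nat.floor_le hxr0
    calc (i : ℝ) * δ' ≤ ((x + r) / δ') * δ' := by nlinarith
    _ = x + r := div_mul_cancel₀ _ hδ'0.ne'
  have hfl2 : x + r < ((i : ℝ) + 1) * δ' := by
    have h1 : (x + r) / δ' < i + 1 := Nat.lt_floor_add_one _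
    calc x + r = ((x + r) / δ') * δ' := (div_mul_cancel₀ _ hδ'0.ne').symm
    _ < ((i : ℝ) + 1) * δ' := by nlinarith
  have hti : t i ≤ x := by simp only [htdef]; linarith
  have hti1 : x ≤ t (i + 1) := by
    simp only [htdef, Nat.cast_add, Nat.cast_one]; linarith
  have hgap1 : x - t i < δ' := by
    simp only [htdef, Nat.cast_add, Nat.cast_one] at hti1 ⊢; push_cast; linarith
  have hgap2 : t (i + 1) - x ≤ δ' := by
    simp only [htdef]; push_cast; linarith
  -- i and i+1 are in range
  have hiN : i ≤ N := by
    have h1 : (x + r) / δ' ≤ 2 * r / δ' := by gcongr; linarith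
    calc i = ⌊(x + r) / δ'⌋₊ := rfl
    _ ≤ ⌊2 * r / δ'⌋₊ := Nat.floor_le_floor h1
    _ ≤ N := Nat.floor_le_ceil _
  have hfi : dist (f n (t i)) (g (t i)) < ε / 3 :=
    hn i (Finset.mem_range.mpr (by omega))
  have hfi1 : dist (f n (t (i + 1))) (g (t (i + 1))) < ε / 3 :=
    hn (i + 1) (Finset.mem_range.mpr (by omega))
  have hJti : t i ∈ Icc (-r - 1) (r + 1) := by
    constructor
    · simp only [htdef]; nlinarith [Nat.cast_nonneg (α := ℝ) i]
    · linarith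
  have hJti1 : t (i + 1) ∈ Icc (-r - 1) (r + 1) := by
    constructor
    · have : t i ≤ t (i + 1) := by linarith
      linarith [hJti.1]
    · linarith
  have hJx : x ∈ Icc (-r - 1) (r + 1) := ⟨by linarith, by linarith⟩
  have hg1 : dist (g (t i)) (g x) < ε / 3 := by
    refine hδ _ hJti _ hJx ?_
    rw [Real.dist_eq, abs_lt]; constructor <;> linarith
  have hg2 : dist (g (t (i + 1))) (g x) < ε / 3 := by
    refine hδ _ hJti1 _ hJx ?_
    rw [Real.dist_eq, abs_lt]; constructor <;> linarith
  rw [Real.dist_eq, abs_lt] at hfi hfi1 hg1 hg2 ⊢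
  rcases hmono n with h | h
  · have h1 := h hti
    have h2 := h hti1
    constructor <;> linarith [hfi.1, hfi.2, hfi1.1, hfi1.2, hg1.1, hg1.2, hg2.1, hg2.2]
  · have h1 := h hti
    have h2 := h hti1
    constructor <;> linarith [hfi.1, hfi.2, hfi1.1, hfi1.2, hg1.1, hg1.2, hg2.1, hg2.2]
end

section
/- Let (Ω, ℱ, P) be a probability space, let Y_n, Y : Ω → ℝ be measurable with Y_n → Y P-almost everywhere, and let f : ℝ → ℝ be continuous and vanishing at infinity (f(z) → 0 as |z| → ∞). Then sup_{x ∈ ℝ} | E[f(Y_n + x)] − E[f(Y + x)] | → 0 as n → ∞. -/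
open Filter Topology MeasureTheory

/-!
Since `f` is uniformly continuous, `a ↦ f (a + ·)` is continuous from `ℝ` into the Banach space
of bounded continuous functions with the sup norm. Uniform convergence of `x ↦ E[f(Yₙ + x)]` is
then dominated convergence for the Bochner integrals `E[f(Yₙ + ·)]` in that space, read off
pointwise through the evaluation maps.
-/

namespace BoundedContinuousFunction

variable {G E : Type*} [SeminormedAddCommGroup G] [NormedAddCommGroup E]

def compAddLeft (f : G →ᵇ E) (a : G) : G →ᵇ E :=
  f.compContinuous (ContinuousMap.addLeft a)

@[simp]
theorem compAddLeft_apply (f : G →ᵇ E) (a x : G) : f.compAddLeft a x = f (a + x) := rfl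

theorem norm_compAddLeft_le (f : G →ᵇ E) (a : G) : ‖f.compAddLeft a‖ ≤ ‖f‖ :=
  f.norm_compContinuous_le _

theorem uniformContinuous_compAddLeft {f : G →ᵇ E} (hf : UniformContinuous f) :
    UniformContinuous f.compAddLeft := by
  rw [Metric.uniformContinuous_iff] at hf ⊢
  intro ε hε
  obtain ⟨δ, hδ, hfδ⟩ := hf (ε / 2) (half_pos hε)
  refine ⟨δ, hδ, fun {a b} hab => ?_⟩
  calc dist (f.compAddLeft a) (f.compAddLeft b) ≤ ε / 2 :=
        (dist_le (half_pos hε).le).2 fun x => (hfδ ((dist_add_right a b x).trans_lt hab)).le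
    _ < ε := half_lt_self hε

variable {Ω : Type*} [MeasurableSpace Ω] {P : Measure Ω} [NormedSpace ℝ E] [CompleteSpace E]

theorem integral_apply {F : Ω → G →ᵇ E} (hF : Integrable F P) (x : G) :
    (∫ ω, F ω ∂P) x = ∫ ω, F ω x ∂P :=
  ((evalCLM ℝ x).integral_comp_comm hF).symm

end BoundedContinuousFunction

open BoundedContinuousFunction

theorem tendstoUniformly_integral_comp_add {G E Ω ι : Type*} [SeminormedAddCommGroup G]
    [NormedAddCommGroup E] [NormedSpace ℝ E] [CompleteSpace E]
    [MeasurableSpace Ω] {P : Measure Ω} [IsFiniteMeasure P]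
    {l : Filter ι} [l.IsCountablyGenerated] {f : G →ᵇ E} (hf : UniformContinuous f)
    {Y : ι → Ω → G} {Y₀ : Ω → G} (hY : ∀ n, AEStronglyMeasurable (Y n) P)
    (hY₀ : AEStronglyMeasurable Y₀ P) (hae : ∀ᵐ ω ∂P, Tendsto (fun n => Y n ω) l (𝓝 (Y₀ ω))) :
    TendstoUniformly (fun n x => ∫ ω, f (Y n ω + x) ∂P) (fun x => ∫ ω, f (Y₀ ω + x) ∂P) l := by
  have hτ := (uniformContinuous_compAddLeft hf).continuous
  have hint : ∀ {Z : Ω → G}, AEStronglyMeasurable Z P →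
      Integrable (fun ω => f.compAddLeft (Z ω)) P :=
    fun hZ => .of_bound (hτ.comp_aestronglyMeasurable hZ) ‖f‖
      (ae_of_all _ fun ω => norm_compAddLeft_le f _)
  have hlim : Tendsto (fun n => ∫ ω, f.compAddLeft (Y n ω) ∂P) l
      (𝓝 (∫ ω, f.compAddLeft (Y₀ ω) ∂P)) :=
    tendsto_integral_filter_of_dominated_convergence (fun _ => ‖f‖)
      (.of_forall fun n => hτ.comp_aestronglyMeasurable (hY n))
      (.of_forall fun _ => ae_of_all _ fun ω => norm_compAddLeft_le f _) (integrable_const _)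
      (hae.mono fun ω hω => (hτ.tendsto _).comp hω)
  have h := tendsto_iff_tendstoUniformly.1 hlim
  simp only [funext (integral_apply (hint (hY _))), funext (integral_apply (hint hY₀)),
    compAddLeft_apply] at h
  exact h

/-- If `Yₙ → Y` almost everywhere on a probability space and `f : ℝ → ℝ` is continuous
and vanishes at infinity, then `x ↦ E[f(Yₙ + x)]` converges to `x ↦ E[f(Y + x)]`
uniformly on `ℝ` (i.e. in the supremum norm). -/
theorem semigroup_sup_norm_convergence
    {Ω : Type*} [MeasurableSpace Ω] (P : Measure Ω) [IsProbabilityMeasure P]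
    (Y : ℕ → Ω → ℝ) (Y₀ : Ω → ℝ)
    (hY : ∀ n, Measurable (Y n)) (hY₀ : Measurable Y₀)
    (hae : ∀ᵐ ω ∂P, Tendsto (fun n => Y n ω) atTop (𝓝 (Y₀ ω)))
    (f : ℝ → ℝ) (hfc : Continuous f) (hf0 : Tendsto f (cocompact ℝ) (𝓝 0)) :
    TendstoUniformly (fun n x => ∫ ω, f (Y n ω + x) ∂P)
      (fun x => ∫ ω, f (Y₀ ω + x) ∂P) atTop := by
  let f₀ : ZeroAtInftyContinuousMap ℝ ℝ := ⟨⟨f, hfc⟩, hf0⟩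
  exact tendstoUniformly_integral_comp_add (f := f₀.toBCF)
    (hfc.uniformContinuous_of_tendsto_cocompact hf0) (fun n => (hY n).aestronglyMeasurable)
    hY₀.aestronglyMeasurable hae
end

section
/- Let f : ℝ → ℝ be continuously differentiable with compact support, and let (Δ_n) be a sequence of positive reals with Δ_n → 0. Then Σ_{k ∈ ℤ} [ ( f((k+1)Δ_n) − f((k−1)Δ_n) ) / (2Δ_n) ]² · Δ_n converges to ∫_{−∞}^{∞} (f′(y))² dy as n → ∞. (For each n the sum has only finitely many nonzero terms since f has compact support.) -/
/-! By the mean value theorem the central difference quotient of the cell `(kΔ, (k+1)Δ]` is `f'(c)`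
for some `c` within `2Δ` of every point of the cell, so the sum is a Riemann sum of `f'²` with
slightly displaced sample points. As `f'²` is uniformly continuous and vanishes outside a ball,
the cellwise error is at most `ε` on a fixed neighbourhood of the support and zero elsewhere;
summing over the cells bounds the total error by `ε` times the length of that neighbourhood. -/

open Filter Topology MeasureTheory Set Metric

theorem norm_sub_le_indicator_closedBall {α E : Type*} [PseudoMetricSpace α]
    [SeminormedAddCommGroup E] {h : α → E} {z x y : α} {R ρ ε : ℝ}
    (hR : Function.support h ⊆ closedBall z R) (hxy : dist x y ≤ ρ)
    (hε : ‖h x - h y‖ ≤ ε) :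
    ‖h x - h y‖ ≤ (closedBall z (R + ρ)).indicator (fun _ => ε) y := by
  by_cases hy : y ∈ closedBall z (R + ρ)
  · rwa [indicator_of_mem hy]
  rw [mem_closedBall, not_le] at hy
  have hzero : ∀ w, R < dist w z → h w = 0 := fun w hw =>
    Function.notMem_support.1 fun hw' => (mem_closedBall.1 (hR hw')).not_gt hw
  rw [indicator_of_notMem (by simpa using hy),
    hzero x (by linarith [dist_triangle_left y z x]), hzero y (by linarith [dist_nonneg.trans hxy]),
    sub_zero, norm_zero]

section RiemannSum

variable {E : Type*} [NormedAddCommGroup E] [NormedSpace ℝ E]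

theorem MeasureTheory.Integrable.hasSum_intervalIntegral_intCast_mul {μ : Measure ℝ} {φ : ℝ → E}
    (hφ : Integrable φ μ) {D : ℝ} (hD : 0 < D) :
    HasSum (fun k : ℤ => ∫ y in k * D..(k + 1) * D, φ y ∂μ) (∫ y, φ y ∂μ) := by
  have hcells := hasSum_integral_iUnion (fun k : ℤ => measurableSet_Ioc)
    (pairwise_disjoint_Ioc_zsmul D) (by rw [iUnion_Ioc_zsmul hD]; exact hφ.integrableOn)
  rw [iUnion_Ioc_zsmul hD, setIntegral_univ] at hcells
  convert hcells using 2 with k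
  rw [intervalIntegral.integral_of_le (by nlinarith)]
  simp

theorem norm_tsum_smul_sub_integral_le [CompleteSpace E] {u : ℤ → E} {h : ℝ → E} {ψ : ℝ → ℝ}
    {D : ℝ} (hD : 0 < D) (hh : Integrable h) (hψ : Integrable ψ)
    (hcell : ∀ k : ℤ, ∀ y ∈ Ioc (k * D) ((k + 1) * D), ‖u k - h y‖ ≤ ψ y) :
    ‖∑' k, D • u k - ∫ y, h y‖ ≤ ∫ y, ψ y := by
  have hψsum := hψ.hasSum_intervalIntegral_intCast_mul hD
  have hcell_int : ∀ k : ℤ, ‖D • u k - ∫ y in k * D..(k + 1) * D, h y‖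
      ≤ ∫ y in k * D..(k + 1) * D, ψ y := by
    intro k
    have hconst : D • u k = ∫ _ in k * D..(k + 1) * D, u k := by
      rw [intervalIntegral.integral_const]; ring_nf
    rw [hconst, ← intervalIntegral.integral_sub intervalIntegrable_const hh.intervalIntegrable]
    exact intervalIntegral.norm_integral_le_of_norm_le (by nlinarith) (.of_forall (hcell k))
      hψ.intervalIntegrable
  have hsum := ((hψsum.summable.of_norm_bounded hcell_int).hasSum.add
    (hh.hasSum_intervalIntegral_intCast_mul hD)).tsum_eq
  simp only [sub_add_cancel] at hsum
  rw [hsum, add_sub_cancel_right]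
  exact tsum_of_norm_bounded hψsum hcell_int

end RiemannSum

theorem exists_deriv_eq_centralDiff_of_mem_Ioc {f : ℝ → ℝ} (hf : Differentiable ℝ f) {D y : ℝ}
    (hD : 0 < D) {k : ℤ} (hy : y ∈ Ioc (k * D) ((k + 1) * D)) :
    ∃ c, dist c y < 2 * D ∧ (f ((k + 1) * D) - f ((k - 1) * D)) / (2 * D) = deriv f c := by
  obtain ⟨c, hc, hc_eq⟩ := exists_deriv_eq_slope f (a := (k - 1) * D) (b := (k + 1) * D)
    (by nlinarith) hf.continuous.continuousOn hf.differentiableOn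
  refine ⟨c, ?_, by rw [hc_eq]; ring_nf⟩
  rw [Real.dist_eq, abs_lt]
  constructor <;> nlinarith [hc.1, hc.2, hy.1, hy.2]

noncomputable def centralDiffSqSum (f : ℝ → ℝ) (D : ℝ) : ℝ :=
  ∑' k : ℤ, ((f (((k : ℝ) + 1) * D) - f (((k : ℝ) - 1) * D)) / (2 * D)) ^ 2 * D

theorem tendsto_centralDiffSqSum {f : ℝ → ℝ} (hf : ContDiff ℝ 1 f) (hsupp : HasCompactSupport f) :
    Tendsto (centralDiffSqSum f) (𝓝[>] 0) (𝓝 (∫ y, deriv f y ^ 2)) := by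
  set h : ℝ → ℝ := fun y => deriv f y ^ 2
  have hh_cont : Continuous h := (hf.continuous_deriv le_rfl).pow 2
  have hh_supp : HasCompactSupport h := hsupp.deriv.comp_left (zero_pow two_ne_zero)
  obtain ⟨R, hR0, hR⟩ := hh_supp.isCompact.isBounded.subset_closedBall_lt 0 0
  rw [Metric.tendsto_nhdsWithin_nhds]
  intro ε hε
  set ε' := ε / (4 * (R + 1)) with hε'_def
  have hε' : 0 < ε' := by positivity
  obtain ⟨δ, hδ, hδh⟩ := Metric.uniformContinuous_iff.1
    (hh_supp.uniformContinuous_of_continuous hh_cont) ε' hε'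
  refine ⟨min δ 1 / 2, by positivity, fun D (hD : 0 < D) hDδ => ?_⟩
  rw [Real.dist_0_eq_abs, abs_of_pos hD] at hDδ
  set ψ := (closedBall 0 (R + 1)).indicator fun _ : ℝ => ε'
  have hcell : ∀ k : ℤ, ∀ y ∈ Ioc (k * D) ((k + 1) * D),
      ‖((f ((k + 1) * D) - f ((k - 1) * D)) / (2 * D)) ^ 2 - h y‖ ≤ ψ y := by
    intro k y hy
    obtain ⟨c, hcy, hc⟩ :=
      exists_deriv_eq_centralDiff_of_mem_Ioc (hf.differentiable one_ne_zero) hD hy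
    have hcy' : dist c y < min δ 1 := by linarith
    rw [hc]
    exact norm_sub_le_indicator_closedBall ((subset_tsupport h).trans hR)
      (hcy'.le.trans (min_le_right _ _)) (hδh (hcy'.trans_le (min_le_left _ _))).le
  have hψ : Integrable ψ := (integrable_indicator_iff isClosed_closedBall.measurableSet).2
    (integrableOn_const measure_closedBall_lt_top.ne)
  calc dist (centralDiffSqSum f D) (∫ y, h y)
      = ‖∑' k : ℤ, D • ((f ((k + 1) * D) - f ((k - 1) * D)) / (2 * D)) ^ 2 - ∫ y, h y‖ := by
        simp only [centralDiffSqSum, dist_eq_norm, smul_eq_mul, mul_comm D]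
    _ ≤ ∫ y, ψ y := norm_tsum_smul_sub_integral_le hD
        (hh_cont.integrable_of_hasCompactSupport hh_supp) hψ hcell
    _ = ε / 2 := by
        rw [integral_indicator_const _ isClosed_closedBall.measurableSet,
          Real.volume_real_closedBall (by positivity), smul_eq_mul, hε'_def]
        field_simp
        ring
    _ < ε := half_lt_self hε

/-- Riemann-sum convergence of squared central differences: for `f ∈ C¹` with compact
support and mesh sizes `Δₙ → 0⁺`,
`Σ_k [(f((k+1)Δₙ) - f((k-1)Δₙ))/(2Δₙ)]² Δₙ → ∫ (f')²`. -/
theorem squared_central_difference_tendsto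
    (f : ℝ → ℝ) (hf : ContDiff ℝ 1 f) (hsupp : HasCompactSupport f)
    (Δ : ℕ → ℝ) (hΔpos : ∀ n, 0 < Δ n) (hΔ0 : Tendsto Δ atTop (𝓝 0)) :
    Tendsto (fun n => ∑' k : ℤ,
        ((f (((k : ℝ) + 1) * Δ n) - f (((k : ℝ) - 1) * Δ n)) / (2 * Δ n)) ^ 2 * Δ n)
      atTop (𝓝 (∫ y : ℝ, (deriv f y) ^ 2)) :=
  (tendsto_centralDiffSqSum hf hsupp).comp
    (tendsto_nhdsWithin_iff.2 ⟨hΔ0, .of_forall hΔpos⟩)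
end
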